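/- For a linear model f(X) = Σ_j a_j X_j, the interventional SHAP part of feature i at sample x equals φ_{i,int} = (1/M!) Σ_R a_i (x_i − E[X_i | X_{S^R} = x_{S^R}]) = (1/M!) Σ_R (f(x) − f([x_{\setminus i}, E[X_i | X_{S^R} = x_{S^R}]])). -/

import Mathlib

/-- `upd x S z` is the vector `[x_S, z_{S̄}]`. -/
noncomputable def upd {M : ℕ} (x : Fin M → ℝ) (S : Finset (Fin M)) (z : Fin M → ℝ) :
    Fin M → ℝ := fun j => if j ∈ S then x j else z j

/-- The coalition `S^R` of features preceding feature `i` in the permutation `R`. -/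
def SR {M : ℕ} (i : Fin M) (R : Equiv.Perm (Fin M)) : Finset (Fin M) :=
  Finset.univ.filter fun j => R.symm j < R.symm i

/-!
Since `f` is linear, adding feature `i` to the coalition `S` changes the integrand only by
`a_i (x_i - z_i)`, because `upd x (insert i S) z = update (upd x S z) i (x i)` and `i ∉ S`.
Linearity of the conditional expectation and `E[c | X_S] = c` then give `a_i (x_i - E[X_i | X_S])`
for every permutation; the second identity is the same computation with `x_i` replaced by
`E[X_i | X_S]` in `f(x)`.
-/

lemma sum_mul_update {ι R : Type*} [Fintype ι] [DecidableEq ι] [CommRing R]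
    (a v : ι → R) (i : ι) (c : R) :
    ∑ j, a j * Function.update v i c j = ∑ j, a j * v j + a i * (c - v i) := by
  have hupd : Function.update v i c = v + Pi.single i (c - v i) := by
    ext j
    rcases eq_or_ne j i with rfl | hj <;> simp [*]
  simp [hupd, mul_add, Finset.sum_add_distrib, Pi.single_apply]

section upd

variable {M : ℕ} (x : Fin M → ℝ) {S : Finset (Fin M)} (z : Fin M → ℝ) {i : Fin M}

lemma upd_insert : upd x (insert i S) z = Function.update (upd x S z) i (x i) := by
  ext j
  rcases eq_or_ne j i with rfl | hj <;> simp [upd, *]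

lemma upd_apply_of_notMem (hi : i ∉ S) : upd x S z i = z i := by
  simp [upd, hi]

lemma sum_mul_upd_insert (a : Fin M → ℝ) (hi : i ∉ S) :
    ∑ j, a j * upd x (insert i S) z j = ∑ j, a j * upd x S z j + a i * (x i - z i) := by
  rw [upd_insert, sum_mul_update, upd_apply_of_notMem x z hi]

end upd

lemma self_notMem_SR {M : ℕ} (i : Fin M) (R : Equiv.Perm (Fin M)) : i ∉ SR i R := by
  simp [SR]

lemma apply_add_mul_sub_of_affine {α : Type*} {E : (α → ℝ) → ℝ}
    (hlin : ∀ (c : ℝ) (g h : α → ℝ), E (fun z => c * g z + h z) = c * E g + E h)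
    (hconst : ∀ c : ℝ, E (fun _ => c) = c) (h g : α → ℝ) (c d : ℝ) :
    E (fun z => h z + c * (d - g z)) = E h + c * (d - E g) := by
  have hsplit : (fun z => h z + c * (d - g z))
      = fun z => -c * g z + ((c * d) * (fun _ => (1 : ℝ)) z + h z) := by
    ext z; ring
  rw [hsplit, hlin, hlin, hconst]
  ring

/-- For the linear model `f(X) = Σ_j a_j X_j`, the interventional SHAP part of feature `i`
at sample `x` equals `(1/M!) Σ_R a_i (x_i − E[X_i | X_{S^R} = x_{S^R}])`, which also equals
`(1/M!) Σ_R (f(x) − f([x_{∖i}, E[X_i | X_{S^R} = x_{S^R}]]))`.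
`CE S g` denotes the conditional expectation `E[g(X) | X_S = x_S]`, which is linear and
maps constants to themselves. -/
theorem linear_interventional_part {M : ℕ} (i : Fin M) (a : Fin M → ℝ) (x : Fin M → ℝ)
    (CE : Finset (Fin M) → ((Fin M → ℝ) → ℝ) → ℝ)
    (hlin : ∀ (S : Finset (Fin M)) (c : ℝ) (g h : (Fin M → ℝ) → ℝ),
      CE S (fun z => c * g z + h z) = c * CE S g + CE S h)
    (hconst : ∀ (S : Finset (Fin M)) (c : ℝ), CE S (fun _ => c) = c) :
    ((1 / (M.factorial : ℝ)) * ∑ R : Equiv.Perm (Fin M),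
        (CE (SR i R) (fun z => ∑ j, a j * upd x (insert i (SR i R)) z j)
          - CE (SR i R) (fun z => ∑ j, a j * upd x (SR i R) z j))
      = (1 / (M.factorial : ℝ)) * ∑ R : Equiv.Perm (Fin M),
          a i * (x i - CE (SR i R) (fun z => z i)))
    ∧ (1 / (M.factorial : ℝ)) * ∑ R : Equiv.Perm (Fin M),
        a i * (x i - CE (SR i R) (fun z => z i))
      = (1 / (M.factorial : ℝ)) * ∑ R : Equiv.Perm (Fin M),
          ((∑ j, a j * x j)
            - ∑ j, a j * Function.update x i (CE (SR i R) (fun z => z i)) j) := by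
  constructor
  · congr 1
    refine Finset.sum_congr rfl fun R _ => ?_
    simp_rw [sum_mul_upd_insert x _ a (self_notMem_SR i R)]
    rw [apply_add_mul_sub_of_affine (hlin _) (hconst _)]
    ring
  · congr 1
    refine Finset.sum_congr rfl fun R _ => ?_
    rw [sum_mul_update]
    ring
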